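/- arXiv:math/0509272 — 2 statements merged into one kernel-verified Lean document; each statement's English description precedes it below -/
import Mathlib

section
/- Let R be a commutative ring and 0 → E₋₁ → E₀ → ⋯ → E_{l+1} → 0 an exact sequence of R-modules. If E₋₁ is free and for each i with 0 ≤ i ≤ l the projective dimension of E_i is at most i, then the projective dimension of E_{l+1} is at most l+1. -/
/-!
`ProjDimLE` agrees with the Ext-theoretic `HasProjectiveDimensionLE`, both ways through the short
exact sequence `0 → ker g → P → M → 0` of a projective presentation. The exact sequence then
splits into short exact sequences `0 → im f_i → E_{i+1} → im f_{i+1} → 0`, and the long exact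
Ext sequence gives `pd (im f_i) ≤ i` by induction, starting from `im f_0 ≅ E_0`, which is free.
-/

/-- `ProjDimLE R n M` says that the `R`-module `M` has projective dimension at most `n`:
for `n = 0` this means `M` is projective, and for `n+1` it means `M` admits a surjection
from a projective module whose kernel has projective dimension at most `n`. -/
def ProjDimLE (R : Type) [CommRing R] : ℕ → ModuleCat R → Prop
  | 0, M => Module.Projective R M
  | n + 1, M => ∃ (P : ModuleCat R) (g : P →ₗ[R] M),
      Module.Projective R P ∧ Function.Surjective g ∧
      ProjDimLE R n (ModuleCat.of R (LinearMap.ker g))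

open CategoryTheory

universe u v

theorem hasProjectiveDimensionLE_range_of_range_eq_ker {R : Type u} [Ring R]
    {A B C : ModuleCat.{v} R} {n : ℕ} {f : A →ₗ[R] B} {g : B →ₗ[R] C}
    (hfg : LinearMap.range f = LinearMap.ker g)
    (hf : HasProjectiveDimensionLE (ModuleCat.of R (LinearMap.range f)) n)
    (hB : HasProjectiveDimensionLE B (n + 1)) :
    HasProjectiveDimensionLE (ModuleCat.of R (LinearMap.range g)) (n + 1) := by
  let S : ShortComplex (ModuleCat.{v} R) :=
    .mk (ModuleCat.ofHom (LinearMap.range f).subtype) (ModuleCat.ofHom g.rangeRestrict)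
      (ModuleCat.hom_ext <| LinearMap.ext fun x ↦
        Subtype.ext (hfg ▸ x.2 : x.1 ∈ LinearMap.ker g))
  have hS : S.ShortExact := ModuleCat.shortComplex_shortExact S
    (LinearMap.exact_iff.2 (by simp [S, hfg])) (Submodule.injective_subtype _)
    g.surjective_rangeRestrict
  exact hS.hasProjectiveDimensionLT_X₃ (n + 1) hf hB

theorem projDimLE_iff_hasProjectiveDimensionLE {R : Type} [CommRing R] (n : ℕ)
    (M : ModuleCat R) : ProjDimLE R n M ↔ HasProjectiveDimensionLE M n := by
  induction n generalizing M with
  | zero =>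
    exact (IsProjective.iff_projective M).trans (projective_iff_hasProjectiveDimensionLE_zero _)
  | succ n ih =>
    constructor
    · rintro ⟨P, g, hP, hg, hker⟩
      have hker' := (ih _).1 hker
      exact (g.shortExact_shortComplexKer hg).hasProjectiveDimensionLT_X₃ (n + 1) hker'
        (hasProjectiveDimensionLT_of_ge _ 1 _ (by omega))
    · intro hM
      have hπ : Function.Surjective (Projective.π M).hom :=
        (ModuleCat.epi_iff_surjective _).1 inferInstance
      refine ⟨Projective.over M, (Projective.π M).hom, inferInstance, hπ, (ih _).2 ?_⟩
      have hP : HasProjectiveDimensionLT (Projective.over M) (n + 1) :=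
        hasProjectiveDimensionLT_of_ge _ 1 _ (by omega)
      exact ((Projective.π M).hom.shortExact_shortComplexKer hπ).hasProjectiveDimensionLT_X₁
        (n + 1) hP hM

/-- Let `R` be a commutative ring and `0 → E₋₁ → E₀ → ⋯ → E_{l+1} → 0` an exact sequence of
`R`-modules (here `E i` denotes `E_{i-1}`, so the sequence runs over `E 0, …, E (l+2)`).
If `E₋₁` is free and for each `0 ≤ i ≤ l` the projective dimension of `E_i` is at most `i`,
then the projective dimension of `E_{l+1}` is at most `l + 1`. -/
theorem projDim_of_exact_sequence
    {R : Type} [CommRing R] (l : ℕ)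
    (E : ℕ → ModuleCat R)
    (f : ∀ i : ℕ, E i →ₗ[R] E (i + 1))
    (hinj : Function.Injective (f 0))
    (hsurj : Function.Surjective (f (l + 1)))
    (hexact : ∀ i : ℕ, i ≤ l → LinearMap.range (f i) = LinearMap.ker (f (i + 1)))
    (hfree : Module.Free R (E 0))
    (hpd : ∀ i : ℕ, i ≤ l → ProjDimLE R i (E (i + 1))) :
    ProjDimLE R (l + 1) (E (l + 2)) := by
  have hrange : ∀ i ≤ l + 1,
      HasProjectiveDimensionLE (ModuleCat.of R (LinearMap.range (f i))) i := by
    intro i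
    induction i with
    | zero =>
      intro _
      rw [← projDimLE_iff_hasProjectiveDimensionLE]
      exact Module.Projective.of_equiv (LinearEquiv.ofInjective (f 0) hinj)
    | succ i ih =>
      intro hi
      have hE := (projDimLE_iff_hasProjectiveDimensionLE _ _).1 (hpd i (by omega))
      exact hasProjectiveDimensionLE_range_of_range_eq_ker (hexact i (by omega)) (ih (by omega))
        (hasProjectiveDimensionLT_of_ge _ (i + 1) _ (by omega))
  rw [projDimLE_iff_hasProjectiveDimensionLE]
  have hlast := hrange (l + 1) le_rfl
  exact hasProjectiveDimensionLT_of_iso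
    (LinearEquiv.ofTop _ (LinearMap.range_eq_top.2 hsurj)).toModuleIso _
end

section
/- Let V₁ and V₂ be finite-dimensional complex vector spaces and T a Zariski-closed subset of V₁ × V₂ stable under (x, y) ↦ (x, t·y) for all nonzero complex t. Then the image S of T under the projection to V₁ is closed in V₁. -/
/-- A subset of `ℂᵏ` is Zariski closed if it is the common zero set of a family of
polynomials. -/
def IsZariskiClosed {k : ℕ} (S : Set (Fin k → ℂ)) : Prop :=
  ∃ T : Set (MvPolynomial (Fin k) ℂ),
    S = {x | ∀ p ∈ T, MvPolynomial.eval x p = 0}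

/-- A subset of `ℂᵐ × ℂⁿ` is Zariski closed if it is the common zero set of a family of
polynomials in `m + n` variables. -/
def IsZariskiClosedProd {m n : ℕ} (T : Set ((Fin m → ℂ) × (Fin n → ℂ))) : Prop :=
  ∃ P : Set (MvPolynomial (Fin m ⊕ Fin n) ℂ),
    T = {xy | ∀ p ∈ P, MvPolynomial.eval (Sum.elim xy.1 xy.2) p = 0}

/-!
A point `(x, y)` of `T` lies on the line `t ↦ (x, t • y)`, which by the cone hypothesis meets `T`
in every `t ≠ 0`. A polynomial vanishing at infinitely many points of a line vanishes on all of
it, so `(x, 0) ∈ T` as well. Hence the projection of `T` is the slice `{x | (x, 0) ∈ T}`, which is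
cut out by the polynomials defining `T` with the second block of variables set to `0`.
-/

open MvPolynomial

theorem MvPolynomial.eval_eq_zero_of_eval_add_smul_eq_zero
    {K σ : Type*} [Field K] [Infinite K] {a b : σ → K} {p : MvPolynomial σ K}
    (h : ∀ t : K, t ≠ 0 → eval (a + t • b) p = 0) : eval a p = 0 := by
  set q : Polynomial K :=
    aeval (fun i => Polynomial.C (a i) + Polynomial.X * Polynomial.C (b i)) p
  have hq : ∀ t, q.eval t = eval (a + t • b) p := by
    intro t
    rw [← Polynomial.coe_aeval_eq_eval, comp_aeval_apply, ← aeval_eq_eval]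
    congr 2
    funext i
    simp [mul_comm (b i) t]
  have hq0 : q = 0 := Polynomial.eq_zero_of_infinite_isRoot q <|
    (Set.finite_singleton 0).infinite_compl.mono fun t ht => by simpa [hq] using h t ht
  simpa [hq0] using (hq 0).symm

theorem MvPolynomial.eval_bind₁_sumElim_X_C {R σ τ : Type*} [CommSemiring R]
    (p : MvPolynomial (σ ⊕ τ) R) (x : σ → R) (y : τ → R) :
    eval x (bind₁ (Sum.elim X (C ∘ y)) p) = eval (Sum.elim x y) p := by
  rw [← aeval_eq_eval, aeval_bind₁, aeval_eq_eval]
  congr 2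
  ext (i | j) <;> simp

theorem Set.image_fst_eq_setOf_mk_zero_mem {α β : Type*} [Zero β] {T : Set (α × β)}
    (h : ∀ xy ∈ T, (xy.1, (0 : β)) ∈ T) : Prod.fst '' T = {x | (x, 0) ∈ T} := by
  ext x
  exact ⟨fun ⟨xy, hxy, hx⟩ => hx ▸ h xy hxy, fun hx => ⟨(x, 0), hx, rfl⟩⟩

namespace IsZariskiClosedProd

variable {m n : ℕ} {T : Set ((Fin m → ℂ) × (Fin n → ℂ))}

theorem isZariskiClosed_setOf_mk_mem (hT : IsZariskiClosedProd T) (y : Fin n → ℂ) :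
    IsZariskiClosed {x | (x, y) ∈ T} := by
  obtain ⟨P, rfl⟩ := hT
  refine ⟨bind₁ (Sum.elim X (C ∘ y)) '' P, ?_⟩
  ext x
  simp [eval_bind₁_sumElim_X_C]

theorem mk_zero_mem_of_smul_mem (hT : IsZariskiClosedProd T)
    (hstable : ∀ t : ℂ, t ≠ 0 → ∀ xy ∈ T, (xy.1, t • xy.2) ∈ T) :
    ∀ xy ∈ T, (xy.1, 0) ∈ T := by
  obtain ⟨P, rfl⟩ := hT
  intro xy hxy p hp
  have hline : ∀ t : ℂ,
      Sum.elim xy.1 0 + t • Sum.elim (0 : Fin m → ℂ) xy.2 = Sum.elim xy.1 (t • xy.2) := by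
    intro t
    ext (i | j) <;> simp
  exact eval_eq_zero_of_eval_add_smul_eq_zero (b := Sum.elim 0 xy.2)
    fun t ht => hline t ▸ hstable t ht xy hxy p hp

end IsZariskiClosedProd

/-- Let `V₁ = ℂᵐ` and `V₂ = ℂⁿ` and let `T` be a Zariski-closed subset of `V₁ × V₂` stable
under `(x, y) ↦ (x, t • y)` for all nonzero complex `t`.  Then the image `S` of `T` under the
projection to `V₁` is Zariski closed in `V₁`. -/
theorem image_of_cone_isClosed {m n : ℕ}
    (T : Set ((Fin m → ℂ) × (Fin n → ℂ)))
    (hT : IsZariskiClosedProd T)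
    (hstable : ∀ t : ℂ, t ≠ 0 → ∀ xy ∈ T, (xy.1, t • xy.2) ∈ T) :
    IsZariskiClosed (Prod.fst '' T) := by
  rw [Set.image_fst_eq_setOf_mk_zero_mem (hT.mk_zero_mem_of_smul_mem hstable)]
  exact hT.isZariskiClosed_setOf_mk_mem 0
end
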